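/- Let p ∈ (1,∞) and p' = p/(p−1). There exist constants c, C > 0 depending only on p such that for all δ ≥ 0, all shifts a ≥ 0, and all t ≥ 0 one has c·(δ+a+t)^{p−2} t² ≤ φ_a(t) ≤ C·(δ+a+t)^{p−2} t², and also c·((δ+a)^{p−1} + t)^{p'−2} t² ≤ (φ_a)*(t) ≤ C·((δ+a)^{p−1} + t)^{p'−2} t², where (φ_a)* is the convex conjugate of φ_a. -/

import Mathlib

/-!
For `t ≥ 0` the shifted function is `φ_a(t) = ∫₀ᵗ g(s) ds` with `g = phiDeriv p (δ + a)`,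
i.e. `g(s) = (ν + s)^(p-2) s` for `ν = δ + a`. This `g` is increasing and satisfies
`g(εs) ≥ min(ε, ε^(p-1)) g(s)` for `ε ≤ 1`, so comparing the integral with the integral over
`[t/2, t]` gives `φ_a(t) ≍ t g(t) = (ν + t)^(p-2) t²`.

For the conjugate, the point is that `g' = phiDeriv p' (ν^(p-1))` inverts `g` up to constants,
because `ν^(p-1) + g(x) ≍ (ν + x)^(p-1)`. Splitting on whether `s ≤ c g(t)` gives a Young
inequality `st ≤ c t g(t) + C s g'(s)`, hence the upper bound on `(φ_a)*(s)`; the lower bound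
comes from testing the supremum at `u = g'(λs)` with `λ` so small that `φ_a(u) ≤ su/2`.
-/

/-- The derivative `φ'(t) = (δ+t)^(p-2)·t` of the N-function `φ = φ_{p,δ}`. -/
noncomputable def phiDeriv (p δ t : ℝ) : ℝ := (δ + t) ^ (p - 2) * t

/-- The shifted N-function `φ_a(t) = ∫₀ᵗ φ'(a+s)·s/(a+s) ds`. -/
noncomputable def phiShift (p δ a t : ℝ) : ℝ :=
  ∫ s in (0:ℝ)..t, phiDeriv p δ (a + s) * s / (a + s)

/-- The convex conjugate of an N-function: `ψ*(s) = sup_{t ≥ 0} (s·t − ψ(t))`. -/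
noncomputable def conjFun (ψ : ℝ → ℝ) (s : ℝ) : ℝ :=
  sSup ((fun t => s * t - ψ t) '' Set.Ici 0)

open Real Set

lemma rpow_bounds_of_bounds {A B m M : ℝ} (e : ℝ) (hA : 0 < A) (hm : 0 < m)
    (hmB : m * A ≤ B) (hBM : B ≤ M * A) :
    min (m ^ e) (M ^ e) * A ^ e ≤ B ^ e ∧ B ^ e ≤ max (m ^ e) (M ^ e) * A ^ e := by
  have hmA : 0 < m * A := mul_pos hm hA
  have hM : 0 < M := pos_of_mul_pos_left (hmA.trans_le (hmB.trans hBM)) hA.le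
  rcases le_total 0 e with he | he
  · have hlo : (m * A) ^ e ≤ B ^ e := rpow_le_rpow hmA.le hmB he
    have hhi : B ^ e ≤ (M * A) ^ e := rpow_le_rpow (hmA.le.trans hmB) hBM he
    rw [mul_rpow hm.le hA.le] at hlo
    rw [mul_rpow hM.le hA.le] at hhi
    constructor
    · exact (mul_le_mul_of_nonneg_right (min_le_left _ _) (by positivity)).trans hlo
    · exact hhi.trans (mul_le_mul_of_nonneg_right (le_max_right _ _) (by positivity))
  · have hlo : (M * A) ^ e ≤ B ^ e := rpow_le_rpow_of_nonpos (hmA.trans_le hmB) hBM he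
    have hhi : B ^ e ≤ (m * A) ^ e := rpow_le_rpow_of_nonpos hmA hmB he
    rw [mul_rpow hM.le hA.le] at hlo
    rw [mul_rpow hm.le hA.le] at hhi
    constructor
    · exact (mul_le_mul_of_nonneg_right (min_le_right _ _) (by positivity)).trans hlo
    · exact hhi.trans (mul_le_mul_of_nonneg_right (le_max_left _ _) (by positivity))

lemma MonotoneOn.intervalIntegral_le_sub_mul {f : ℝ → ℝ} {a b : ℝ} (hab : a ≤ b)
    (hf : MonotoneOn f (Icc a b)) : ∫ s in a..b, f s ≤ (b - a) * f b := by
  have hint : IntervalIntegrable f MeasureTheory.volume a b :=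
    MonotoneOn.intervalIntegrable (by rwa [uIcc_of_le hab])
  calc ∫ s in a..b, f s ≤ ∫ _ in a..b, f b :=
        intervalIntegral.integral_mono_on hab hint intervalIntegrable_const
          fun s hs => hf hs (right_mem_Icc.mpr hab) hs.2
    _ = (b - a) * f b := by rw [intervalIntegral.integral_const, smul_eq_mul]

lemma MonotoneOn.sub_mul_le_intervalIntegral {f : ℝ → ℝ} {a b : ℝ} (hab : a ≤ b)
    (hf : MonotoneOn f (Icc a b)) : (b - a) * f a ≤ ∫ s in a..b, f s := by
  have hint : IntervalIntegrable f MeasureTheory.volume a b :=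
    MonotoneOn.intervalIntegrable (by rwa [uIcc_of_le hab])
  calc (b - a) * f a = ∫ _ in a..b, f a := by rw [intervalIntegral.integral_const, smul_eq_mul]
    _ ≤ ∫ s in a..b, f s :=
        intervalIntegral.integral_mono_on hab intervalIntegrable_const hint
          fun s hs => hf (left_mem_Icc.mpr hab) hs hs.1

lemma mul_phiDeriv_self (r ν x : ℝ) : x * phiDeriv r ν x = (ν + x) ^ (r - 2) * x ^ 2 := by
  rw [phiDeriv]; ring

section phiDeriv

variable {r ν : ℝ}

lemma phiDeriv_nonneg (hν : 0 ≤ ν) {x : ℝ} (hx : 0 ≤ x) : 0 ≤ phiDeriv r ν x :=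
  mul_nonneg (rpow_nonneg (add_nonneg hν hx) _) hx

lemma phiDeriv_zero (r ν : ℝ) : phiDeriv r ν 0 = 0 := by
  rw [phiDeriv, mul_zero]

lemma phiDeriv_eq_rpow_mul_div {x : ℝ} (hνx : 0 < ν + x) :
    phiDeriv r ν x = (ν + x) ^ (r - 1) * (x / (ν + x)) := by
  rw [phiDeriv, show r - 1 = r - 2 + 1 by ring, rpow_add_one hνx.ne']
  field_simp

lemma phiDeriv_monotoneOn (hr : 1 < r) (hν : 0 ≤ ν) : MonotoneOn (phiDeriv r ν) (Ici 0) := by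
  intro x hx y hy hxy
  rcases (mem_Ici.mp hx).eq_or_lt with rfl | hx0
  · rw [phiDeriv_zero]; exact phiDeriv_nonneg hν hy
  have hνx : 0 < ν + x := by linarith
  rw [phiDeriv_eq_rpow_mul_div hνx, phiDeriv_eq_rpow_mul_div (by linarith)]
  have hpow : (ν + x) ^ (r - 1) ≤ (ν + y) ^ (r - 1) :=
    rpow_le_rpow hνx.le (by linarith) (by linarith)
  have hfrac : x / (ν + x) ≤ y / (ν + y) := by
    rw [div_le_div_iff₀ hνx (by linarith)]; nlinarith
  exact mul_le_mul hpow hfrac (div_nonneg hx0.le hνx.le) (rpow_nonneg (by linarith) _)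

lemma min_mul_phiDeriv_le_phiDeriv_mul (hν : 0 ≤ ν) {ε x : ℝ} (hε : 0 < ε) (hε1 : ε ≤ 1)
    (hx : 0 ≤ x) : min ε (ε ^ (r - 1)) * phiDeriv r ν x ≤ phiDeriv r ν (ε * x) := by
  rcases hx.eq_or_lt with rfl | hx0
  · simp [phiDeriv_zero]
  have hνx : 0 < ν + x := by linarith
  have hB := (rpow_bounds_of_bounds (r - 2) hνx hε (by nlinarith : ε * (ν + x) ≤ ν + ε * x)
    (by nlinarith : ν + ε * x ≤ 1 * (ν + x))).1
  have hmin : min ε (ε ^ (r - 1)) = ε * min (ε ^ (r - 2)) (1 ^ (r - 2)) := by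
    rw [one_rpow, mul_min_of_nonneg _ _ hε.le, mul_one, min_comm, mul_comm,
      ← rpow_add_one hε.ne']
    ring_nf
  calc min ε (ε ^ (r - 1)) * phiDeriv r ν x
      = ε * x * (min (ε ^ (r - 2)) (1 ^ (r - 2)) * (ν + x) ^ (r - 2)) := by
        rw [hmin, phiDeriv]; ring
    _ ≤ ε * x * (ν + ε * x) ^ (r - 2) := by gcongr
    _ = phiDeriv r ν (ε * x) := by rw [phiDeriv]; ring

lemma rpow_sub_one_add_phiDeriv_bounds (hr : 1 < r) (hν : 0 ≤ ν) {x : ℝ} (hx : 0 < x) :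
    min 2⁻¹ (2 ^ (1 - r)) * (ν + x) ^ (r - 1) ≤ ν ^ (r - 1) + phiDeriv r ν x ∧
      ν ^ (r - 1) + phiDeriv r ν x ≤ 2 * (ν + x) ^ (r - 1) := by
  have hνx : 0 < ν + x := by linarith
  have hG : phiDeriv r ν x = (ν + x) ^ (r - 1) * (x / (ν + x)) := phiDeriv_eq_rpow_mul_div hνx
  have hfrac : x / (ν + x) ≤ 1 := (div_le_one hνx).mpr (by linarith)
  have hνpow : ν ^ (r - 1) ≤ (ν + x) ^ (r - 1) := rpow_le_rpow hν (by linarith) (by linarith)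
  have hA : 0 < (ν + x) ^ (r - 1) := rpow_pos_of_pos hνx _
  refine ⟨?_, by nlinarith⟩
  rcases le_total x ν with hxν | hνx'
  · have hhalf : ((ν + x) / 2) ^ (r - 1) ≤ ν ^ (r - 1) :=
      rpow_le_rpow (by positivity) (by linarith) (by linarith)
    rw [div_rpow hνx.le zero_le_two, div_eq_mul_inv, mul_comm, ← rpow_neg zero_le_two,
      neg_sub] at hhalf
    have := mul_le_mul_of_nonneg_right (min_le_right 2⁻¹ ((2 : ℝ) ^ (1 - r))) hA.le
    nlinarith [phiDeriv_nonneg (r := r) hν hx.le]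
  · have hfrac' : 2⁻¹ ≤ x / (ν + x) := by rw [le_div_iff₀ hνx]; linarith
    have := mul_le_mul_of_nonneg_right (min_le_left 2⁻¹ ((2 : ℝ) ^ (1 - r))) hA.le
    nlinarith [rpow_nonneg hν (r - 1)]

/-- `phiDeriv q (ν ^ (r - 1))` is an inverse of `phiDeriv r ν` up to constants. -/
lemma phiDeriv_phiDeriv_bounds {q : ℝ} (hr : 1 < r) (hrq : (r - 1) * (q - 1) = 1) :
    ∃ κ K : ℝ, 0 < κ ∧ 0 < K ∧ ∀ ν : ℝ, 0 ≤ ν → ∀ x : ℝ, 0 ≤ x →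
      κ * x ≤ phiDeriv q (ν ^ (r - 1)) (phiDeriv r ν x) ∧
        phiDeriv q (ν ^ (r - 1)) (phiDeriv r ν x) ≤ K * x := by
  set m : ℝ := min 2⁻¹ (2 ^ (1 - r))
  have hm : 0 < m := lt_min (by norm_num) (by positivity)
  refine ⟨min (m ^ (q - 2)) (2 ^ (q - 2)), max (m ^ (q - 2)) (2 ^ (q - 2)),
    lt_min (by positivity) (by positivity), lt_max_of_lt_right (by positivity),
    fun ν hν x hx => ?_⟩
  rcases hx.eq_or_lt with rfl | hx0
  · simp [phiDeriv_zero]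
  have hνx : 0 < ν + x := by linarith
  obtain ⟨hlo, hhi⟩ := rpow_sub_one_add_phiDeriv_bounds hr hν hx0
  obtain ⟨hκ, hK⟩ := rpow_bounds_of_bounds (q - 2) (rpow_pos_of_pos hνx _) hm hlo hhi
  have hg : 0 ≤ phiDeriv r ν x := phiDeriv_nonneg hν hx
  have hcancel : ((ν + x) ^ (r - 1)) ^ (q - 2) * phiDeriv r ν x = x := by
    rw [phiDeriv, ← rpow_mul hνx.le, ← mul_assoc, ← rpow_add hνx,
      show (r - 1) * (q - 2) + (r - 2) = 0 by linear_combination hrq, rpow_zero, one_mul]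
  constructor
  · calc _ = min (m ^ (q - 2)) (2 ^ (q - 2)) * ((ν + x) ^ (r - 1)) ^ (q - 2)
            * phiDeriv r ν x := by rw [mul_assoc, hcancel]
      _ ≤ _ := mul_le_mul_of_nonneg_right hκ hg
  · calc _ ≤ max (m ^ (q - 2)) (2 ^ (q - 2)) * ((ν + x) ^ (r - 1)) ^ (q - 2)
            * phiDeriv r ν x := mul_le_mul_of_nonneg_right hK hg
      _ = _ := by rw [mul_assoc, hcancel]

lemma integral_phiDeriv_le (hr : 1 < r) (hν : 0 ≤ ν) {t : ℝ} (ht : 0 ≤ t) :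
    ∫ s in (0 : ℝ)..t, phiDeriv r ν s ≤ t * phiDeriv r ν t := by
  simpa using
    ((phiDeriv_monotoneOn hr hν).mono Icc_subset_Ici_self).intervalIntegral_le_sub_mul ht

lemma le_integral_phiDeriv (hr : 1 < r) (hν : 0 ≤ ν) {t : ℝ} (ht : 0 ≤ t) :
    min 2⁻¹ (2⁻¹ ^ (r - 1)) / 2 * (t * phiDeriv r ν t) ≤
      ∫ s in (0 : ℝ)..t, phiDeriv r ν s := by
  have hmono := phiDeriv_monotoneOn hr hν
  have hint : ∀ a b : ℝ, 0 ≤ a → 0 ≤ b →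
      IntervalIntegrable (phiDeriv r ν) MeasureTheory.volume a b :=
    fun a b ha hb => (hmono.mono fun s hs => le_trans (le_min ha hb) hs.1).intervalIntegrable
  have hlow : 0 ≤ ∫ s in (0 : ℝ)..t / 2, phiDeriv r ν s :=
    intervalIntegral.integral_nonneg (by linarith) fun s hs => phiDeriv_nonneg hν hs.1
  have hhigh : (t - t / 2) * phiDeriv r ν (t / 2) ≤ ∫ s in t / 2..t, phiDeriv r ν s :=
    (hmono.mono fun s hs => le_trans (by linarith) hs.1).sub_mul_le_intervalIntegral (by linarith)
  have hhalf := min_mul_phiDeriv_le_phiDeriv_mul (r := r) hν (by norm_num : (0 : ℝ) < 2⁻¹)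
    (by norm_num) ht
  rw [← intervalIntegral.integral_add_adjacent_intervals (hint 0 (t / 2) le_rfl (by linarith))
    (hint (t / 2) t (by linarith) ht)]
  rw [inv_mul_eq_div] at hhalf
  nlinarith

end phiDeriv

lemma phiShift_eq_integral_phiDeriv {p δ a t : ℝ} (ha : 0 ≤ a) (ht : 0 ≤ t) :
    phiShift p δ a t = ∫ s in (0 : ℝ)..t, phiDeriv p (δ + a) s := by
  refine intervalIntegral.integral_congr fun s hs => ?_
  rw [uIcc_of_le ht] at hs
  rcases (add_nonneg ha hs.1).eq_or_lt with has | has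
  · obtain rfl : s = 0 := by linarith [hs.1]
    simp [phiDeriv_zero]
  · simp only [phiDeriv, ← add_assoc]
    field_simp

lemma phiShift_bounds {p : ℝ} (hp : 1 < p) {δ a : ℝ} (hδ : 0 ≤ δ) (ha : 0 ≤ a) {t : ℝ}
    (ht : 0 ≤ t) :
    min 2⁻¹ (2⁻¹ ^ (p - 1)) / 2 * (t * phiDeriv p (δ + a) t) ≤ phiShift p δ a t ∧
      phiShift p δ a t ≤ t * phiDeriv p (δ + a) t := by
  rw [phiShift_eq_integral_phiDeriv ha ht]
  exact ⟨le_integral_phiDeriv hp (add_nonneg hδ ha) ht,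
    integral_phiDeriv_le hp (add_nonneg hδ ha) ht⟩

lemma conjFun_le {ψ : ℝ → ℝ} {s M : ℝ} (h : ∀ u, 0 ≤ u → s * u - ψ u ≤ M) : conjFun ψ s ≤ M :=
  csSup_le (nonempty_Ici.image _) (forall_mem_image.2 h)

lemma le_conjFun {ψ : ℝ → ℝ} {s M : ℝ} (h : ∀ u, 0 ≤ u → s * u - ψ u ≤ M) {u : ℝ}
    (hu : 0 ≤ u) : s * u - ψ u ≤ conjFun ψ s :=
  le_csSup ⟨M, forall_mem_image.2 h⟩ (mem_image_of_mem _ hu)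

section Conjugate

variable {p q : ℝ}

lemma one_lt_of_sub_one_mul_sub_one_eq_one (hp : 1 < p) (hpq : (p - 1) * (q - 1) = 1) :
    1 < q := by
  nlinarith

lemma mul_le_mul_phiDeriv_add_mul_phiDeriv (hp : 1 < p) (hpq : (p - 1) * (q - 1) = 1) {c : ℝ}
    (hc : 0 < c) (hc1 : c ≤ 1) :
    ∃ C : ℝ, 0 < C ∧ ∀ ν : ℝ, 0 ≤ ν → ∀ s : ℝ, 0 ≤ s → ∀ t : ℝ, 0 ≤ t →
      s * t ≤ c * (t * phiDeriv p ν t) + C * (s * phiDeriv q (ν ^ (p - 1)) s) := by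
  obtain ⟨κ, _, hκ, -, hdual⟩ := phiDeriv_phiDeriv_bounds hp hpq
  have hm : 0 < min c (c ^ (q - 1)) := lt_min hc (rpow_pos_of_pos hc _)
  refine ⟨(min c (c ^ (q - 1)) * κ)⁻¹, inv_pos.2 (mul_pos hm hκ), fun ν hν s hs t ht => ?_⟩
  set b := ν ^ (p - 1)
  have hb : 0 ≤ b := rpow_nonneg hν _
  have hA : 0 ≤ c * (t * phiDeriv p ν t) := by
    have := phiDeriv_nonneg (r := p) hν ht; positivity
  have hB : 0 ≤ (min c (c ^ (q - 1)) * κ)⁻¹ * (s * phiDeriv q b s) := by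
    have := phiDeriv_nonneg (r := q) hb hs; positivity
  rcases le_or_gt s (c * phiDeriv p ν t) with hsmall | hlarge
  · nlinarith [mul_le_mul_of_nonneg_right hsmall ht]
  have hGp : 0 ≤ phiDeriv p ν t := phiDeriv_nonneg hν ht
  have ht_le : min c (c ^ (q - 1)) * κ * t ≤ phiDeriv q b s :=
    calc min c (c ^ (q - 1)) * κ * t = min c (c ^ (q - 1)) * (κ * t) := mul_assoc _ _ _
      _ ≤ min c (c ^ (q - 1)) * phiDeriv q b (phiDeriv p ν t) := by
          gcongr; exact (hdual ν hν t ht).1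
      _ ≤ phiDeriv q b (c * phiDeriv p ν t) := min_mul_phiDeriv_le_phiDeriv_mul hb hc hc1 hGp
      _ ≤ phiDeriv q b s := phiDeriv_monotoneOn (one_lt_of_sub_one_mul_sub_one_eq_one hp hpq) hb
          (mem_Ici.2 (mul_nonneg hc.le hGp)) (mem_Ici.2 hs) hlarge.le
  rw [← le_inv_mul_iff₀ (mul_pos hm hκ)] at ht_le
  nlinarith [mul_le_mul_of_nonneg_left ht_le hs]

lemma conjFun_bounds_of_bounds (hp : 1 < p) (hpq : (p - 1) * (q - 1) = 1) {c : ℝ}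
    (hc : 0 < c) (hc1 : c ≤ 1) :
    ∃ c' C' : ℝ, 0 < c' ∧ 0 < C' ∧ ∀ ν : ℝ, 0 ≤ ν → ∀ ψ : ℝ → ℝ,
      (∀ u, 0 ≤ u → c * (u * phiDeriv p ν u) ≤ ψ u ∧ ψ u ≤ u * phiDeriv p ν u) →
      ∀ s, 0 ≤ s → c' * (s * phiDeriv q (ν ^ (p - 1)) s) ≤ conjFun ψ s ∧
        conjFun ψ s ≤ C' * (s * phiDeriv q (ν ^ (p - 1)) s) := by
  have hq := one_lt_of_sub_one_mul_sub_one_eq_one hp hpq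
  obtain ⟨C, hC, hyoung⟩ := mul_le_mul_phiDeriv_add_mul_phiDeriv hp hpq hc hc1
  obtain ⟨_, K, -, hK, hdual⟩ :=
    phiDeriv_phiDeriv_bounds (q := p) hq (by linear_combination hpq)
  set l := min 1 (2 * K)⁻¹
  have hl : 0 < l := lt_min one_pos (by positivity)
  have hKl : K * l ≤ 2⁻¹ := by
    calc K * l ≤ K * (2 * K)⁻¹ := by gcongr; exact min_le_right _ _
      _ = 2⁻¹ := by field_simp
  refine ⟨min l (l ^ (q - 1)) / 2, C, by positivity, hC, fun ν hν ψ hψ s hs => ?_⟩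
  set b := ν ^ (p - 1)
  have hb : 0 ≤ b := rpow_nonneg hν _
  have hbound : ∀ u, 0 ≤ u → s * u - ψ u ≤ C * (s * phiDeriv q b s) :=
    fun u hu => by linarith [hyoung ν hν s hs u hu, (hψ u hu).1]
  refine ⟨?_, conjFun_le hbound⟩
  -- test the supremum at `u = phiDeriv q b (l * s)`, where `phiDeriv p ν u ≤ s / 2`
  set u := phiDeriv q b (l * s)
  have hu : 0 ≤ u := phiDeriv_nonneg hb (by positivity)
  have hbν : b ^ (q - 1) = ν := by
    rw [← rpow_mul hν, hpq, rpow_one]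
  have hGu : phiDeriv p ν u ≤ s / 2 := by
    have := (hdual b hb (l * s) (by positivity)).2
    rw [hbν] at this
    nlinarith
  have hψu : ψ u ≤ s / 2 * u := by nlinarith [(hψ u hu).2]
  have hscale : min l (l ^ (q - 1)) * phiDeriv q b s ≤ u :=
    min_mul_phiDeriv_le_phiDeriv_mul hb hl (min_le_left _ _) hs
  calc min l (l ^ (q - 1)) / 2 * (s * phiDeriv q b s)
      = s / 2 * (min l (l ^ (q - 1)) * phiDeriv q b s) := by ring
    _ ≤ s / 2 * u := by gcongr
    _ ≤ s * u - ψ u := by linarith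
    _ ≤ conjFun ψ s := le_conjFun hbound hu

end Conjugate

/-- For `p ∈ (1,∞)` and `p' = p/(p−1)`, there exist constants `c, C > 0` depending
only on `p` such that for all `δ ≥ 0`, all shifts `a ≥ 0` and all `t ≥ 0`:
`c·(δ+a+t)^{p−2} t² ≤ φ_a(t) ≤ C·(δ+a+t)^{p−2} t²` and
`c·((δ+a)^{p−1}+t)^{p'−2} t² ≤ (φ_a)*(t) ≤ C·((δ+a)^{p−1}+t)^{p'−2} t²`. -/
theorem phiShift_equiv (p : ℝ) (hp : 1 < p) :
    ∃ c C : ℝ, 0 < c ∧ 0 < C ∧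
      ∀ δ : ℝ, 0 ≤ δ → ∀ a : ℝ, 0 ≤ a → ∀ t : ℝ, 0 ≤ t →
        (c * (δ + a + t) ^ (p - 2) * t ^ 2 ≤ phiShift p δ a t ∧
          phiShift p δ a t ≤ C * (δ + a + t) ^ (p - 2) * t ^ 2) ∧
        (c * ((δ + a) ^ (p - 1) + t) ^ (p / (p - 1) - 2) * t ^ 2
            ≤ conjFun (phiShift p δ a) t ∧
          conjFun (phiShift p δ a) t
            ≤ C * ((δ + a) ^ (p - 1) + t) ^ (p / (p - 1) - 2) * t ^ 2) := by
  have hpq : (p - 1) * (p / (p - 1) - 1) = 1 := by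
    have : p - 1 ≠ 0 := by linarith
    field_simp
    ring
  set c := min 2⁻¹ ((2⁻¹ : ℝ) ^ (p - 1)) / 2
  have hc : 0 < c := by positivity
  have hc1 : c ≤ 1 := by
    show min _ _ / 2 ≤ 1
    linarith [min_le_left 2⁻¹ ((2⁻¹ : ℝ) ^ (p - 1))]
  obtain ⟨c', C', hc', hC', hconj⟩ := conjFun_bounds_of_bounds hp hpq hc hc1
  refine ⟨min c c', max 1 C', lt_min hc hc', lt_max_of_lt_left one_pos,
    fun δ hδ a ha t ht => ?_⟩
  obtain ⟨hlo, hhi⟩ := phiShift_bounds hp hδ ha ht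
  obtain ⟨hclo, hchi⟩ :=
    hconj (δ + a) (add_nonneg hδ ha) _ (fun u hu => phiShift_bounds hp hδ ha hu) t ht
  rw [mul_phiDeriv_self] at hlo hhi hclo hchi
  have hX : 0 ≤ (δ + a + t) ^ (p - 2) * t ^ 2 := by positivity
  have hY : 0 ≤ ((δ + a) ^ (p - 1) + t) ^ (p / (p - 1) - 2) * t ^ 2 := by positivity
  refine ⟨⟨?_, ?_⟩, ?_, ?_⟩ <;> rw [mul_assoc]
  · exact (mul_le_mul_of_nonneg_right (min_le_left _ _) hX).trans hlo
  · exact hhi.trans (le_mul_of_one_le_left hX (le_max_left _ _))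
  · exact (mul_le_mul_of_nonneg_right (min_le_right _ _) hY).trans hclo
  · exact hchi.trans (mul_le_mul_of_nonneg_right (le_max_right _ _) hY)
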